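/- Let N ≥ 1, let L ≥ 1 divide N, let F be the N × N unitary DFT matrix, and let H be the N × N block-diagonal local Fourier matrix with N/L diagonal blocks each equal to the L × L unitary DFT matrix. Suppose y = F x_p + H x_q with K_p := ‖x_p‖₀ ≥ 1, K_q := ‖x_q‖₀ ≥ 1, and (2K_p + L − 1) K_q < N. Then there exists ℓ ∈ {0, …, N−1} such that y_{(ℓ+j) mod N} = (F x_p)_{(ℓ+j) mod N} for all j = 0, 1, …, 2K_p − 1; moreover, x_p is the unique vector in ℂ^N with at most K_p nonzero entries whose DFT agrees with y on this cyclic window. -/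

import Mathlib

/-- The `N × N` unitary DFT matrix, `F n m = exp (2πi n m / N) / √N`. -/
noncomputable def dft (N : ℕ) : Matrix (Fin N) (Fin N) ℂ :=
  fun n m => Complex.exp (2 * Real.pi * Complex.I * (n : ℕ) * (m : ℕ) / N) / (Real.sqrt N : ℂ)

/-- The `N × N` block-diagonal local Fourier matrix with `N / L` diagonal blocks, each equal
to the `L × L` unitary DFT matrix: its `(n, m)` entry is
`exp (2πi (n mod L)(m mod L) / L) / √L` if `n` and `m` lie in the same length-`L` block,
and `0` otherwise. -/
noncomputable def localdft (N L : ℕ) : Matrix (Fin N) (Fin N) ℂ :=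
  fun n m =>
    if (n : ℕ) / L = (m : ℕ) / L then
      Complex.exp (2 * Real.pi * Complex.I * ((n : ℕ) % L) * ((m : ℕ) % L) / L) /
        (Real.sqrt L : ℂ)
    else 0

open scoped Classical in
/-- The number of nonzero entries (the "ℓ₀ norm") of a vector. -/
noncomputable def l0 {ι : Type*} [Fintype ι] (x : ι → ℂ) : ℕ :=
  (Finset.univ.filter (fun i => x i ≠ 0)).card

/-!
Every nonzero entry of `H x_q` lies in a length-`L` block that contains a support point of `x_q`.
A cyclic window of length `2 K_p` meets a fixed block for at most `2 K_p + L - 1` starting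
positions, so `(2 K_p + L - 1) K_q < N` leaves a window on which `y = F x_p`. On that window
the DFT of the difference of two `K_p`-sparse solutions vanishes at `2 K_p` consecutive
frequencies; restricted to its support this is a Vandermonde system in distinct powers of a
primitive `N`-th root of unity, so the difference is zero.
-/

open Finset Matrix

namespace ProSparse

theorem l0_eq_card {ι : Type*} [Fintype ι] (x : ι → ℂ) [DecidablePred fun i => x i ≠ 0] :
    l0 x = #{i | x i ≠ 0} := by
  unfold l0
  congr 1
  exact filter_congr_decidable _ _ _

theorem l0_sub_le {ι : Type*} [Fintype ι] (x y : ι → ℂ) : l0 (x - y) ≤ l0 x + l0 y := by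
  classical
  simp only [l0_eq_card]
  refine (card_le_card fun i => ?_).trans (card_union_le _ _)
  simp only [mem_filter, mem_univ, true_and, mem_union, Pi.sub_apply]
  contrapose!
  rintro ⟨hx, hy⟩
  rw [hx, hy, sub_zero]

theorem eq_zero_of_forall_sum_mul_pow_eq_zero {R ι : Type*} [CommRing R] [IsDomain R]
    {s : Finset ι} {f v : ι → R} (hf : Set.InjOn f s)
    (h : ∀ i < #s, ∑ j ∈ s, v j * f j ^ i = 0) : ∀ j ∈ s, v j = 0 := by
  let e := s.equivFin.symm
  have hv : (fun i => v (e i)) = 0 :=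
    Matrix.eq_zero_of_forall_pow_sum_mul_pow_eq_zero (f := fun i => f (e i))
      (fun a b hab => e.injective (Subtype.ext (hf (e a).2 (e b).2 hab))) fun i => by
        rw [← h i i.isLt, ← s.sum_coe_sort]
        exact e.sum_comp fun j => v j * f j ^ (i : ℕ)
  intro j hj
  simpa using congrFun hv (e.symm ⟨j, hj⟩)

theorem dft_mulVec_apply (N : ℕ) (d : Fin N → ℂ) (n : Fin N) :
    (dft N *ᵥ d) n =
      (∑ m : Fin N, Complex.exp (2 * Real.pi * Complex.I / N) ^ ((n : ℕ) * (m : ℕ)) * d m) /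
        Real.sqrt N := by
  rw [mulVec, dotProduct, sum_div]
  refine sum_congr rfl fun m _ => ?_
  rw [dft, ← Complex.exp_nat_mul, div_mul_eq_mul_div]
  push_cast
  ring_nf

theorem eq_zero_of_l0_le_of_dft_eq_zero_on_window {N K : ℕ} (hN : 0 < N) (ℓ : ℕ)
    {d : Fin N → ℂ} (hd : l0 d ≤ K)
    (h : ∀ j < K, (dft N *ᵥ d) ⟨(ℓ + j) % N, Nat.mod_lt _ hN⟩ = 0) : d = 0 := by
  classical
  set ζ := Complex.exp (2 * Real.pi * Complex.I / N)
  have hζ : IsPrimitiveRoot ζ N := Complex.isPrimitiveRoot_exp N hN.ne'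
  set s : Finset (Fin N) := {m | d m ≠ 0} with hs
  have hv := eq_zero_of_forall_sum_mul_pow_eq_zero (s := s)
    (f := fun m : Fin N => ζ ^ (m : ℕ)) (v := fun m => ζ ^ (ℓ * m) * d m)
    (fun a _ b _ hab => Fin.ext (hζ.pow_inj a.isLt b.isLt hab)) fun i hi => by
      have hsum := h i (hi.trans_le (l0_eq_card d ▸ hd))
      rw [dft_mulVec_apply, div_eq_zero_iff, or_iff_left (by simp [hN.ne'])] at hsum
      rw [← hsum, hs, sum_filter]
      refine sum_congr rfl fun m _ => ?_
      split_ifs with hm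
      · rw [mul_right_comm, ← pow_mul, ← pow_add]
        congr 1
        refine pow_eq_pow_of_modEq ?_ hζ.pow_eq_one
        rw [show ℓ * m + m * i = (ℓ + i) * m by ring]
        exact ((Nat.mod_modEq _ _).mul_right _).symm
      · rw [not_not.1 hm, mul_zero]
  ext m
  by_contra hm
  exact hm (by simpa [hζ.ne_zero hN.ne'] using hv m (by simpa [hs] using hm))

theorem localdft_mulVec_apply_eq_zero {N L : ℕ} {x : Fin N → ℂ} {n : Fin N}
    (h : ∀ m : Fin N, x m ≠ 0 → (n : ℕ) / L ≠ (m : ℕ) / L) :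
    (localdft N L *ᵥ x) n = 0 := by
  rw [mulVec, dotProduct]
  refine Fintype.sum_eq_zero _ fun m => ?_
  by_cases hm : x m = 0
  · rw [hm, mul_zero]
  · simp [localdft, h m hm]

theorem exists_window_avoiding_blocks {N K L : ℕ} (hL : 1 ≤ L) (B : Finset ℕ)
    (hB : #B * (K + L - 1) < N) : ∃ ℓ < N, ∀ j < K, (ℓ + j) % N / L ∉ B := by
  have hN : 0 < N := by omega
  -- A window starting at `ℓ` that meets block `b` at `n = b * L + r` has
  -- `ℓ ≡ b * L + t - (K - 1)` with `t = r + (K - 1 - j) < K + L - 1`; `N * K` keeps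
  -- the subtraction in `ℕ` from truncating.
  let bad := B.biUnion fun b =>
    (range (K + L - 1)).image fun t => (b * L + t + N * K - (K - 1)) % N
  have hbad : #bad < #(range N) := calc
    #bad ≤ ∑ b ∈ B, #((range (K + L - 1)).image fun t => (b * L + t + N * K - (K - 1)) % N) :=
      card_biUnion_le
    _ ≤ ∑ _b ∈ B, (K + L - 1) := sum_le_sum fun b _ => card_image_le.trans (card_range _).le
    _ < #(range N) := by rwa [sum_const, smul_eq_mul, card_range]
  obtain ⟨ℓ, hℓN, hℓ⟩ := exists_mem_notMem_of_card_lt_card hbad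
  rw [mem_range] at hℓN
  refine ⟨ℓ, hℓN, fun j hj hmem => hℓ (mem_biUnion.2 ⟨_, hmem, mem_image.2
    ⟨(ℓ + j) % N % L + (K - 1 - j), mem_range.2 ?_, ?_⟩⟩)⟩
  · have := Nat.mod_lt ((ℓ + j) % N) (by omega : 0 < L)
    omega
  · set n := (ℓ + j) % N
    have hnL : n / L * L + n % L = n := Nat.div_add_mod' n L
    have hKN : K ≤ N * K := Nat.le_mul_of_pos_left K hN
    calc (n / L * L + (n % L + (K - 1 - j)) + N * K - (K - 1)) % N
        = (n + (N * K - j)) % N := by congr 1; omega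
      _ = (ℓ + j + (N * K - j)) % N := Nat.mod_add_mod _ _ _
      _ = (ℓ + N * K) % N := by congr 1; omega
      _ = ℓ := by rw [Nat.add_mul_mod_self_left, Nat.mod_eq_of_lt hℓN]

end ProSparse

open ProSparse Finset Matrix

/-- **ProSparse recovery guarantee for Fourier plus local Fourier.** Let `L ∣ N`, `F` the
`N × N` unitary DFT matrix and `H` the block-diagonal local Fourier matrix with `N / L` blocks
`F_L`. If `y = F x_p + H x_q` with `K_p = ‖x_p‖₀ ≥ 1`, `K_q = ‖x_q‖₀ ≥ 1` and
`(2 K_p + L - 1) K_q < N`, then there exists `ℓ ∈ {0, …, N-1}` such that `y` agrees with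
`F x_p` on the cyclic window of length `2 K_p` starting at `ℓ`; moreover `x_p` is the unique
vector with at most `K_p` nonzero entries whose DFT agrees with `y` on that window. -/
theorem stmt19 (N L : ℕ) (hL : 1 ≤ L)
    (xp xq : Fin N → ℂ) (Kp Kq : ℕ)
    (hKp : l0 xp = Kp) (hKq : l0 xq = Kq)
    (hbound : (2 * Kp + L - 1) * Kq < N)
    (y : Fin N → ℂ) (hy : y = (dft N).mulVec xp + (localdft N L).mulVec xq) :
    ∃ ℓ < N,
      (∀ j < 2 * Kp,
        y ⟨(ℓ + j) % N, Nat.mod_lt _ (by omega)⟩ =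
          (dft N).mulVec xp ⟨(ℓ + j) % N, Nat.mod_lt _ (by omega)⟩) ∧
      (∀ c : Fin N → ℂ, l0 c ≤ Kp →
        (∀ j < 2 * Kp,
          (dft N).mulVec c ⟨(ℓ + j) % N, Nat.mod_lt _ (by omega)⟩ =
            y ⟨(ℓ + j) % N, Nat.mod_lt _ (by omega)⟩) →
        c = xp) := by
  classical
  set B := (univ.filter (xq · ≠ 0)).image fun m : Fin N => (m : ℕ) / L
  have hB : #B * (2 * Kp + L - 1) < N := calc
    #B * (2 * Kp + L - 1) ≤ Kq * (2 * Kp + L - 1) :=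
      Nat.mul_le_mul_right _ (card_image_le.trans (l0_eq_card xq ▸ hKq).le)
    _ < N := by rwa [mul_comm]
  obtain ⟨ℓ, hℓN, hℓ⟩ := exists_window_avoiding_blocks hL B hB
  have hwin : ∀ j < 2 * Kp, y ⟨(ℓ + j) % N, Nat.mod_lt _ (by omega)⟩ =
      (dft N *ᵥ xp) ⟨(ℓ + j) % N, Nat.mod_lt _ (by omega)⟩ := fun j hj => by
    rw [hy, Pi.add_apply, localdft_mulVec_apply_eq_zero, add_zero]
    exact fun m hm heq => hℓ j hj (heq ▸ mem_image_of_mem _ (by simpa using hm))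
  refine ⟨ℓ, hℓN, hwin, fun c hc hagree => sub_eq_zero.1 ?_⟩
  refine eq_zero_of_l0_le_of_dft_eq_zero_on_window (K := 2 * Kp) (by omega) ℓ
    ((l0_sub_le c xp).trans (by omega)) fun j hj => ?_
  rw [mulVec_sub, Pi.sub_apply, hagree j hj, hwin j hj, sub_self]
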